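/- arXiv:0710.4784 — 2 statements merged into one kernel-verified Lean document; each statement's English description precedes it below -/
import Mathlib

section
/- Let φ(x) be smooth with φ_x ≠ 0 on an interval I, ψ(x,y) smooth with ψ_y ≠ 0 on I×J, and let a(x), b(x) be smooth. Define A1, A0, B0, C2, C1, C0, D4, D3, D2, D1, D0 by the formulas in the context, and let α, β be smooth functions with α(φ(x)) = a(x) and β(φ(x)) = b(x). Then a four-times continuously differentiable function y(x) with graph in I×J is a solution of equation (E1) with these coefficients if and only if the image function u of t (defined by u(φ(x)) = ψ(x, y(x))) satisfies u'''' + α(t)·u' + β(t)·u = 0. -/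
open Set

/-- Partial derivative with respect to the first variable. -/
noncomputable def px (f : ℝ → ℝ → ℝ) : ℝ → ℝ → ℝ := fun x y => deriv (fun s => f s y) x

/-- Partial derivative with respect to the second variable. -/
noncomputable def py (f : ℝ → ℝ → ℝ) : ℝ → ℝ → ℝ := fun x y => deriv (fun s => f x s) y

/-- Smoothness of a function of two real variables on a set. -/
def Smooth2On (f : ℝ → ℝ → ℝ) (U : Set (ℝ × ℝ)) : Prop :=
  ContDiffOn ℝ (⊤ : ℕ∞) (fun p : ℝ × ℝ => f p.1 p.2) U

/-- The left-hand side of equation (E1) evaluated along `y` at `x`. -/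
noncomputable def E1val (A0 A1 B0 C0 C1 C2 D0 D1 D2 D3 D4 : ℝ → ℝ → ℝ)
    (y : ℝ → ℝ) (x : ℝ) : ℝ :=
  iteratedDeriv 4 y x
    + (A1 x (y x) * deriv y x + A0 x (y x)) * iteratedDeriv 3 y x
    + B0 x (y x) * (iteratedDeriv 2 y x) ^ 2
    + (C2 x (y x) * (deriv y x) ^ 2 + C1 x (y x) * deriv y x + C0 x (y x))
        * iteratedDeriv 2 y x
    + D4 x (y x) * (deriv y x) ^ 4 + D3 x (y x) * (deriv y x) ^ 3
    + D2 x (y x) * (deriv y x) ^ 2 + D1 x (y x) * deriv y x + D0 x (y x)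


/-!
Write `F x = ψ x (y x)`. If `u (φ x) = F x` on `I`, the chain rule computes `F', …, F''''` in
two ways: through the partial derivatives of `ψ` and `y', …, y''''`, and through
`u', …, u''''` at `φ x` and `φ', …, φ''''`. Solving the second set of relations for the
derivatives of `u` (possible since `φ' ≠ 0`) and substituting turns the left-hand side of (E1)
into `φ'^4 / ψ_y · (u'''' + a u' + b u)`, a nonzero multiple of the linear equation. Conversely,
the image `u` of any `y` exists because `φ` is injective on the interval `I` (Rolle) and, by the
inverse function theorem, has a `C⁴` inverse on the open set `φ '' I`.
-/

open Filter Topology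

theorem ContDiffAt.hasDerivAt_iteratedDeriv {f : ℝ → ℝ} {n : WithTop ℕ∞} {k : ℕ} {x : ℝ}
    (hf : ContDiffAt ℝ n f x) (hk : (k : WithTop ℕ∞) < n) :
    HasDerivAt (iteratedDeriv k f) (iteratedDeriv (k + 1) f x) x := by
  rw [iteratedDeriv_succ]
  refine DifferentiableAt.hasDerivAt ?_
  rw [show iteratedDeriv k f = fun z => iteratedFDeriv ℝ k f z (fun _ => 1) from
    funext fun z => iteratedDeriv_eq_iteratedFDeriv]
  exact (hf.differentiableAt_iteratedFDeriv hk).continuousMultilinear_apply_const _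

theorem ContDiffAt.hasDerivAt_deriv {f : ℝ → ℝ} {n : WithTop ℕ∞} {x : ℝ}
    (hf : ContDiffAt ℝ n f x) (hn : 1 < n) : HasDerivAt (deriv f) (iteratedDeriv 2 f x) x := by
  simpa only [iteratedDeriv_one] using hf.hasDerivAt_iteratedDeriv (k := 1) (by exact_mod_cast hn)

theorem iteratedDeriv_succ_eq_of_eventuallyEq {f g : ℝ → ℝ} {k : ℕ} {x g' : ℝ}
    (hfg : iteratedDeriv k f =ᶠ[𝓝 x] g) (hg : HasDerivAt g g' x) :
    iteratedDeriv (k + 1) f x = g' := by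
  rw [iteratedDeriv_succ, hfg.deriv_eq, hg.deriv]

theorem iteratedDeriv_comp_four {g f : ℝ → ℝ} {x : ℝ} (hg : ContDiffAt ℝ 4 g (f x))
    (hf : ContDiffAt ℝ 4 f x) :
    iteratedDeriv 4 (g ∘ f) x =
      iteratedDeriv 4 g (f x) * deriv f x ^ 4 +
      6 * iteratedDeriv 3 g (f x) * iteratedDeriv 2 f x * deriv f x ^ 2 +
      iteratedDeriv 2 g (f x) *
        (4 * iteratedDeriv 3 f x * deriv f x + 3 * iteratedDeriv 2 f x ^ 2) +
      deriv g (f x) * iteratedDeriv 4 f x := by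
  have h3 : iteratedDeriv 3 (g ∘ f) =ᶠ[𝓝 x] fun z =>
      iteratedDeriv 3 g (f z) * deriv f z ^ 3 +
      3 * iteratedDeriv 2 g (f z) * iteratedDeriv 2 f z * deriv f z +
      deriv g (f z) * iteratedDeriv 3 f z := by
    filter_upwards [hf.eventually (by simp), hf.continuousAt.eventually (hg.eventually (by simp))]
      with z hfz hgz
    exact iteratedDeriv_comp_three (hgz.of_le (by norm_num)) (hfz.of_le (by norm_num))
  refine iteratedDeriv_succ_eq_of_eventuallyEq h3 ?_
  have f1 := (hf.differentiableAt (by simp)).hasDerivAt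
  have f2 := hf.hasDerivAt_deriv (by norm_num)
  have f3 := hf.hasDerivAt_iteratedDeriv (k := 2) (by norm_num)
  have f4 := hf.hasDerivAt_iteratedDeriv (k := 3) (by norm_num)
  have g1 := (hg.hasDerivAt_deriv (by norm_num)).comp x f1
  have g2 := (hg.hasDerivAt_iteratedDeriv (k := 2) (by norm_num)).comp x f1
  have g3 := (hg.hasDerivAt_iteratedDeriv (k := 3) (by norm_num)).comp x f1
  refine ((((g3.mul (f2.pow 3)).add (((g2.mul f3).mul f2).const_mul 3)).add
    (g1.mul f4)).congr_of_eventuallyEq (.of_forall fun z => ?_)).congr_deriv ?_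
  · simp only [Pi.add_apply, Pi.mul_apply, Pi.pow_apply, Function.comp_apply]
    ring
  · simp only [Pi.mul_apply, Pi.pow_apply, Function.comp_apply]
    push_cast
    ring

theorem Set.OrdConnected.injOn_of_deriv_ne_zero {I : Set ℝ} {φ : ℝ → ℝ} (hIc : I.OrdConnected)
    (hφ : ContinuousOn φ I) (hφx : ∀ x ∈ I, deriv φ x ≠ 0) : InjOn φ I := by
  suffices ∀ p ∈ I, ∀ q ∈ I, p < q → φ p ≠ φ q from fun p hp q hq hpq =>
    by_contra fun hne => (lt_or_gt_of_ne hne).elim (fun h => this p hp q hq h hpq)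
      fun h => this q hq p hp h hpq.symm
  intro p hp q hq hpq heq
  obtain ⟨c, hc, hc0⟩ := exists_deriv_eq_zero hpq (hφ.mono (hIc.out hp hq)) heq
  exact hφx c (hIc.out hp hq (Ioo_subset_Icc_self hc)) hc0

theorem ContDiffAt.contDiffAt_of_eventually_leftInverse {f g : ℝ → ℝ} {n : WithTop ℕ∞}
    {a : ℝ} (hf : ContDiffAt ℝ n f a) (hn : n ≠ 0) (hf' : deriv f a ≠ 0)
    (hg : ∀ᶠ x in 𝓝 a, g (f x) = x) : ContDiffAt ℝ n g (f a) := by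
  have hd : HasFDerivAt f (ContinuousLinearEquiv.unitsEquivAut ℝ (Units.mk0 _ hf') :
      ℝ →L[ℝ] ℝ) a :=
    ((hf.differentiableAt hn).hasDerivAt).hasFDerivAt_equiv hf'
  refine (hf.to_localInverse hd hn).congr_of_eventuallyEq ?_
  rw [EventuallyEq, ← (hf.hasStrictDerivAt hn).map_nhds_eq hf', eventually_map]
  filter_upwards [hg, (hf.hasStrictFDerivAt' hd hn).eventually_left_inverse] with x hgx hLx
  rw [hgx]
  exact hLx.symm

theorem exists_comp_eq_of_deriv_ne_zero {I : Set ℝ} {φ F : ℝ → ℝ} {n : WithTop ℕ∞}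
    (hI : IsOpen I) (hIc : I.OrdConnected) (hn : n ≠ 0) (hφ : ContDiffOn ℝ n φ I)
    (hφx : ∀ x ∈ I, deriv φ x ≠ 0) (hF : ContDiffOn ℝ n F I) :
    ∃ (u : ℝ → ℝ) (W : Set ℝ), IsOpen W ∧ (∀ x ∈ I, φ x ∈ W) ∧ ContDiffOn ℝ n u W ∧
      ∀ x ∈ I, u (φ x) = F x := by
  have hφs : ∀ x ∈ I, ContDiffAt ℝ n φ x := fun x hx => hφ.contDiffAt (hI.mem_nhds hx)
  have hinv : LeftInvOn (Function.invFunOn φ I) φ I :=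
    (hIc.injOn_of_deriv_ne_zero hφ.continuousOn hφx).leftInvOn_invFunOn
  refine ⟨F ∘ Function.invFunOn φ I, φ '' I, ?_, fun x hx => ⟨x, hx, rfl⟩, ?_,
    fun x hx => congrArg F (hinv hx)⟩
  · rw [isOpen_iff_mem_nhds]
    rintro _ ⟨x, hx, rfl⟩
    rw [← ((hφs x hx).hasStrictDerivAt hn).map_nhds_eq (hφx x hx)]
    exact image_mem_map (hI.mem_nhds hx)
  · rintro _ ⟨x, hx, rfl⟩
    have hg := (hφs x hx).contDiffAt_of_eventually_leftInverse hn (hφx x hx)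
      (eventually_of_mem (hI.mem_nhds hx) fun t ht => hinv ht)
    refine (ContDiffAt.comp (φ x) ?_ hg).contDiffWithinAt
    rw [hinv hx]
    exact hF.contDiffAt (hI.mem_nhds hx)

section Partials

variable {f : ℝ → ℝ → ℝ} {U : Set (ℝ × ℝ)}

theorem Smooth2On.hasDerivAt_comp (hf : Smooth2On f U) (hU : IsOpen U) {γ : ℝ → ℝ × ℝ}
    {γ' : ℝ × ℝ} {t : ℝ} (hγ : HasDerivAt γ γ' t) (ht : γ t ∈ U) :
    HasDerivAt (fun s => f (γ s).1 (γ s).2)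
      (fderiv ℝ (fun q : ℝ × ℝ => f q.1 q.2) (γ t) γ') t :=
  (((hf.differentiableOn (by simp)).differentiableAt (hU.mem_nhds ht)).hasFDerivAt).comp_hasDerivAt
    t hγ

theorem px_eq_fderiv (hf : Smooth2On f U) (hU : IsOpen U) {x y : ℝ} (hp : (x, y) ∈ U) :
    px f x y = fderiv ℝ (fun q : ℝ × ℝ => f q.1 q.2) (x, y) (1, 0) :=
  (hf.hasDerivAt_comp hU ((hasDerivAt_id x).prodMk (hasDerivAt_const x y)) hp).deriv

theorem py_eq_fderiv (hf : Smooth2On f U) (hU : IsOpen U) {x y : ℝ} (hp : (x, y) ∈ U) :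
    py f x y = fderiv ℝ (fun q : ℝ × ℝ => f q.1 q.2) (x, y) (0, 1) :=
  (hf.hasDerivAt_comp hU ((hasDerivAt_const y x).prodMk (hasDerivAt_id y)) hp).deriv

theorem Smooth2On.hasDerivAt_comp_graph (hf : Smooth2On f U) (hU : IsOpen U) {y : ℝ → ℝ}
    {x y' : ℝ} (hy : HasDerivAt y y' x) (hp : (x, y x) ∈ U) :
    HasDerivAt (fun s => f s (y s)) (px f x (y x) + py f x (y x) * y') x := by
  refine (hf.hasDerivAt_comp hU ((hasDerivAt_id x).prodMk hy) hp).congr_deriv ?_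
  rw [px_eq_fderiv hf hU hp, py_eq_fderiv hf hU hp, mul_comm, ← smul_eq_mul, ← map_smul,
    ← map_add]
  simp

theorem Smooth2On.px_of_isOpen (hf : Smooth2On f U) (hU : IsOpen U) : Smooth2On (px f) U :=
  ((hf.fderiv_of_isOpen hU le_rfl).clm_apply contDiffOn_const).congr
    fun p hp => px_eq_fderiv hf hU (x := p.1) (y := p.2) hp

theorem Smooth2On.py_of_isOpen (hf : Smooth2On f U) (hU : IsOpen U) : Smooth2On (py f) U :=
  ((hf.fderiv_of_isOpen hU le_rfl).clm_apply contDiffOn_const).congr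
    fun p hp => py_eq_fderiv hf hU (x := p.1) (y := p.2) hp

theorem px_py_comm (hf : Smooth2On f U) (hU : IsOpen U) {x y : ℝ} (hp : (x, y) ∈ U) :
    px (py f) x y = py (px f) x y := by
  set F : ℝ × ℝ → ℝ := fun q => f q.1 q.2
  have hF2 : ContDiffAt ℝ 2 F (x, y) :=
    (hf.contDiffAt (hU.mem_nhds hp)).of_le (WithTop.coe_le_coe.2 le_top)
  have hdF : DifferentiableAt ℝ (fderiv ℝ F) (x, y) :=
    hF2.fderiv_right (m := 1) (by norm_num) |>.differentiableAt (by norm_num)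
  have hsecond : ∀ (g : ℝ → ℝ → ℝ) (v w : ℝ × ℝ),
      (∀ q ∈ U, g q.1 q.2 = fderiv ℝ F q w) →
      fderiv ℝ (fun q : ℝ × ℝ => g q.1 q.2) (x, y) v = fderiv ℝ (fderiv ℝ F) (x, y) v w := by
    intro g v w hg
    rw [(eventuallyEq_of_mem (hU.mem_nhds hp) hg).fderiv_eq, fderiv_clm_apply hdF
      (differentiableAt_const w)]
    simp
  rw [px_eq_fderiv (hf.py_of_isOpen hU) hU hp, py_eq_fderiv (hf.px_of_isOpen hU) hU hp,
    hsecond _ _ _ fun q hq => py_eq_fderiv hf hU hq,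
    hsecond _ _ _ fun q hq => px_eq_fderiv hf hU hq,
    hF2.isSymmSndFDerivAt (by simp [minSmoothness_of_isRCLikeNormedField])]

theorem py_congr {g : ℝ → ℝ → ℝ} (hU : IsOpen U) (h : ∀ q ∈ U, f q.1 q.2 = g q.1 q.2)
    {x y : ℝ} (hp : (x, y) ∈ U) : py f x y = py g x y :=
  EventuallyEq.deriv_eq <| eventuallyEq_of_mem
    ((continuousAt_const.prodMk continuousAt_id).preimage_mem_nhds (hU.mem_nhds hp))
    fun s hs => h (x, s) hs

theorem px_py_py_comm (hf : Smooth2On f U) (hU : IsOpen U) {x y : ℝ} (hp : (x, y) ∈ U) :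
    px (py (py f)) x y = py (py (px f)) x y := by
  rw [px_py_comm (hf.py_of_isOpen hU) hU hp]
  exact py_congr hU (fun q hq => px_py_comm hf hU hq) hp

theorem px_py_py_py_comm (hf : Smooth2On f U) (hU : IsOpen U) {x y : ℝ} (hp : (x, y) ∈ U) :
    px (py (py (py f))) x y = py (py (py (px f))) x y := by
  rw [px_py_comm ((hf.py_of_isOpen hU).py_of_isOpen hU) hU hp]
  exact py_congr hU (fun q hq => px_py_py_comm hf hU hq) hp

theorem Smooth2On.hasDerivAt_py_comp_graph (hf : Smooth2On f U) (hU : IsOpen U) {y : ℝ → ℝ}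
    {x y' : ℝ} (hy : HasDerivAt y y' x) (hp : (x, y x) ∈ U) :
    HasDerivAt (fun s => py f s (y s)) (py (px f) x (y x) + py (py f) x (y x) * y') x := by
  rw [← px_py_comm hf hU hp]
  exact (hf.py_of_isOpen hU).hasDerivAt_comp_graph hU hy hp

theorem Smooth2On.hasDerivAt_py_py_comp_graph (hf : Smooth2On f U) (hU : IsOpen U) {y : ℝ → ℝ}
    {x y' : ℝ} (hy : HasDerivAt y y' x) (hp : (x, y x) ∈ U) :
    HasDerivAt (fun s => py (py f) s (y s))
      (py (py (px f)) x (y x) + py (py (py f)) x (y x) * y') x := by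
  rw [← px_py_py_comm hf hU hp]
  exact ((hf.py_of_isOpen hU).py_of_isOpen hU).hasDerivAt_comp_graph hU hy hp

theorem Smooth2On.hasDerivAt_py_py_py_comp_graph (hf : Smooth2On f U) (hU : IsOpen U)
    {y : ℝ → ℝ} {x y' : ℝ} (hy : HasDerivAt y y' x) (hp : (x, y x) ∈ U) :
    HasDerivAt (fun s => py (py (py f)) s (y s))
      (py (py (py (px f))) x (y x) + py (py (py (py f))) x (y x) * y') x := by
  rw [← px_py_py_py_comm hf hU hp]
  exact (((hf.py_of_isOpen hU).py_of_isOpen hU).py_of_isOpen hU).hasDerivAt_comp_graph hU hy hp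

end Partials

section Graph

variable {I J : Set ℝ} {ψ : ℝ → ℝ → ℝ} {y : ℝ → ℝ} {x : ℝ}

theorem Smooth2On.comp_graph {n : ℕ∞} (hψ : Smooth2On ψ (I ×ˢ J)) (hy : ContDiffOn ℝ n y I)
    (hyJ : ∀ x ∈ I, y x ∈ J) :
    ContDiffOn ℝ n (fun s => ψ s (y s)) I :=
  (hψ.of_le (WithTop.coe_le_coe.2 le_top)).comp (contDiffOn_id.prodMk hy) fun x hx => ⟨hx, hyJ x hx⟩

theorem iteratedDeriv_one_comp_graph (hI : IsOpen I) (hJ : IsOpen J) (hψ : Smooth2On ψ (I ×ˢ J))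
    (hy : ContDiffOn ℝ 1 y I) (hyJ : ∀ x ∈ I, y x ∈ J) (hx : x ∈ I) :
    iteratedDeriv 1 (fun s => ψ s (y s)) x = px ψ x (y x) + py ψ x (y x) * deriv y x := by
  have hy1 := ((hy.contDiffAt (hI.mem_nhds hx)).differentiableAt one_ne_zero).hasDerivAt
  rw [iteratedDeriv_one, (hψ.hasDerivAt_comp_graph (hI.prod hJ) hy1 ⟨hx, hyJ x hx⟩).deriv]

theorem iteratedDeriv_two_comp_graph (hI : IsOpen I) (hJ : IsOpen J) (hψ : Smooth2On ψ (I ×ˢ J))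
    (hy : ContDiffOn ℝ 2 y I) (hyJ : ∀ x ∈ I, y x ∈ J) (hx : x ∈ I) :
    iteratedDeriv 2 (fun s => ψ s (y s)) x =
      px (px ψ) x (y x) + 2 * py (px ψ) x (y x) * deriv y x +
      py (py ψ) x (y x) * deriv y x ^ 2 + py ψ x (y x) * iteratedDeriv 2 y x := by
  have hU := hI.prod hJ
  have hp : (x, y x) ∈ I ×ˢ J := ⟨hx, hyJ x hx⟩
  have hyx := hy.contDiffAt (hI.mem_nhds hx)
  have y1 := (hyx.differentiableAt two_ne_zero).hasDerivAt
  have y2 := hyx.hasDerivAt_deriv (by norm_num)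
  refine iteratedDeriv_succ_eq_of_eventuallyEq (eventuallyEq_of_mem (hI.mem_nhds hx)
    fun t ht => iteratedDeriv_one_comp_graph hI hJ hψ (hy.of_le one_le_two) hyJ ht) ?_
  refine (((hψ.px_of_isOpen hU).hasDerivAt_comp_graph hU y1 hp).add
    ((hψ.hasDerivAt_py_comp_graph hU y1 hp).mul y2)).congr_deriv ?_
  ring

theorem iteratedDeriv_three_comp_graph (hI : IsOpen I) (hJ : IsOpen J) (hψ : Smooth2On ψ (I ×ˢ J))
    (hy : ContDiffOn ℝ 3 y I) (hyJ : ∀ x ∈ I, y x ∈ J) (hx : x ∈ I) :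
    iteratedDeriv 3 (fun s => ψ s (y s)) x =
      px (px (px ψ)) x (y x) + 3 * py (px (px ψ)) x (y x) * deriv y x +
      3 * py (py (px ψ)) x (y x) * deriv y x ^ 2 + py (py (py ψ)) x (y x) * deriv y x ^ 3 +
      3 * py (px ψ) x (y x) * iteratedDeriv 2 y x +
      3 * py (py ψ) x (y x) * deriv y x * iteratedDeriv 2 y x +
      py ψ x (y x) * iteratedDeriv 3 y x := by
  have hU := hI.prod hJ
  have hp : (x, y x) ∈ I ×ˢ J := ⟨hx, hyJ x hx⟩
  have hyx := hy.contDiffAt (hI.mem_nhds hx)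
  have y1 := (hyx.differentiableAt three_ne_zero).hasDerivAt
  have y2 := hyx.hasDerivAt_deriv (by norm_num)
  have y3 := hyx.hasDerivAt_iteratedDeriv (k := 2) (by norm_num)
  refine iteratedDeriv_succ_eq_of_eventuallyEq (eventuallyEq_of_mem (hI.mem_nhds hx)
    fun t ht => iteratedDeriv_two_comp_graph hI hJ hψ (hy.of_le (by norm_num)) hyJ ht) ?_
  refine (((((hψ.px_of_isOpen hU).px_of_isOpen hU).hasDerivAt_comp_graph hU y1 hp).add
    ((((hψ.px_of_isOpen hU).hasDerivAt_py_comp_graph hU y1 hp).mul y2).const_mul 2)).add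
    ((hψ.hasDerivAt_py_py_comp_graph hU y1 hp).mul (y2.pow 2))).add
    ((hψ.hasDerivAt_py_comp_graph hU y1 hp).mul y3)
    |>.congr_of_eventuallyEq (.of_forall fun z => ?_) |>.congr_deriv ?_
  · simp only [Pi.add_apply, Pi.mul_apply, Pi.pow_apply]
    ring
  · simp only [Pi.pow_apply]
    push_cast
    ring

theorem iteratedDeriv_four_comp_graph (hI : IsOpen I) (hJ : IsOpen J) (hψ : Smooth2On ψ (I ×ˢ J))
    (hy : ContDiffOn ℝ 4 y I) (hyJ : ∀ x ∈ I, y x ∈ J) (hx : x ∈ I) :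
    iteratedDeriv 4 (fun s => ψ s (y s)) x =
      px (px (px (px ψ))) x (y x) + 4 * py (px (px (px ψ))) x (y x) * deriv y x +
      6 * py (py (px (px ψ))) x (y x) * deriv y x ^ 2 +
      4 * py (py (py (px ψ))) x (y x) * deriv y x ^ 3 +
      py (py (py (py ψ))) x (y x) * deriv y x ^ 4 +
      6 * py (px (px ψ)) x (y x) * iteratedDeriv 2 y x +
      12 * py (py (px ψ)) x (y x) * deriv y x * iteratedDeriv 2 y x +
      6 * py (py (py ψ)) x (y x) * deriv y x ^ 2 * iteratedDeriv 2 y x +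
      3 * py (py ψ) x (y x) * iteratedDeriv 2 y x ^ 2 +
      4 * py (px ψ) x (y x) * iteratedDeriv 3 y x +
      4 * py (py ψ) x (y x) * deriv y x * iteratedDeriv 3 y x +
      py ψ x (y x) * iteratedDeriv 4 y x := by
  have hU := hI.prod hJ
  have hp : (x, y x) ∈ I ×ˢ J := ⟨hx, hyJ x hx⟩
  have hyx := hy.contDiffAt (hI.mem_nhds hx)
  have y1 := (hyx.differentiableAt four_ne_zero).hasDerivAt
  have y2 := hyx.hasDerivAt_deriv (by norm_num)
  have y3 := hyx.hasDerivAt_iteratedDeriv (k := 2) (by norm_num)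
  have y4 := hyx.hasDerivAt_iteratedDeriv (k := 3) (by norm_num)
  have hψx := hψ.px_of_isOpen hU
  have hψxx := hψx.px_of_isOpen hU
  refine iteratedDeriv_succ_eq_of_eventuallyEq (eventuallyEq_of_mem (hI.mem_nhds hx)
    fun t ht => iteratedDeriv_three_comp_graph hI hJ hψ (hy.of_le (by norm_num)) hyJ ht) ?_
  refine (((((((hψxx.px_of_isOpen hU).hasDerivAt_comp_graph hU y1 hp).add
    (((hψxx.hasDerivAt_py_comp_graph hU y1 hp).mul y2).const_mul 3)).add
    (((hψx.hasDerivAt_py_py_comp_graph hU y1 hp).mul (y2.pow 2)).const_mul 3)).add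
    ((hψ.hasDerivAt_py_py_py_comp_graph hU y1 hp).mul (y2.pow 3))).add
    (((hψx.hasDerivAt_py_comp_graph hU y1 hp).mul y3).const_mul 3)).add
    ((((hψ.hasDerivAt_py_py_comp_graph hU y1 hp).mul y2).mul y3).const_mul 3)).add
    ((hψ.hasDerivAt_py_comp_graph hU y1 hp).mul y4)
    |>.congr_of_eventuallyEq (.of_forall fun z => ?_) |>.congr_deriv ?_
  · simp only [Pi.add_apply, Pi.mul_apply, Pi.pow_apply]
    ring
  · simp only [Pi.mul_apply, Pi.pow_apply]
    push_cast
    ring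

end Graph

/-- `pₖ`, `Pᵢⱼ`, `yₖ`, `Uₖ`, `Fₖ` stand for `φ⁽ᵏ⁾(x)`, `∂ₓⁱ∂_yʲψ(x, y x)`, `y⁽ᵏ⁾(x)`, `u⁽ᵏ⁾(φ x)`
and `F⁽ᵏ⁾(x)` with `F = u ∘ φ = ψ(·, y ·)`; the coefficient hypotheses are those of (E1). -/
theorem E1_jet_identity
    {p1 p2 p3 p4 P00 P10 P01 P20 P11 P02 P30 P21 P12 P03 P40 P31 P22 P13 P04
      y1 y2 y3 y4 U0 U1 U2 U3 U4 F1 F2 F3 F4 a b A0 A1 B0 C0 C1 C2 D0 D1 D2 D3 D4 : ℝ}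
    (hp1 : p1 ≠ 0) (hP01 : P01 ≠ 0)
    (hA1 : A1 = 4 * P02 / P01)
    (hA0 : A0 = -2 * (3 * p2 * P01 - 2 * p1 * P11) / (p1 * P01))
    (hB0 : B0 = 3 * P02 / P01)
    (hC2 : C2 = 6 * P03 / P01)
    (hC1 : C1 = -6 * (3 * p2 * P02 - 2 * p1 * P12) / (p1 * P01))
    (hC0 : C0 = -(((4 * p3 * p1 - 15 * p2 ^ 2) * P01 + 6 * (3 * p2 * P11 - p1 * P21) * p1)
      / (p1 ^ 2 * P01)))
    (hD4 : D4 = P04 / P01)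
    (hD3 : D3 = -2 * (3 * p2 * P03 - 2 * p1 * P13) / (p1 * P01))
    (hD2 : D2 = -((4 * p3 * p1 * P02 - 15 * p2 ^ 2 * P02 + 18 * p2 * p1 * P12
      - 6 * p1 ^ 2 * P22) / (p1 ^ 2 * P01)))
    (hD1 : D1 = -((3 * (5 * p2 ^ 2 * P01 - 10 * p2 * p1 * P11 + 6 * p1 ^ 2 * P21) * p2
      - (p1 ^ 3 * P01 * a + 4 * P31) * p1 ^ 3 - 2 * (5 * p2 * P01 - 4 * p1 * P11) * p3 * p1
      + p4 * p1 ^ 2 * P01) / (p1 ^ 3 * P01)))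
    (hD0 : D0 = -(((15 * p2 ^ 3 - p1 ^ 6 * a + p4 * p1 ^ 2) * P10
      - (10 * p3 * p2 * P10 - 4 * p3 * p1 * P20 + 15 * p2 ^ 2 * P20 - 6 * p2 * p1 * P30
        + p1 ^ 6 * b * P00 + p1 ^ 2 * P40) * p1) / (p1 ^ 3 * P01)))
    (hU0 : U0 = P00)
    (hF1 : F1 = P10 + P01 * y1)
    (hF2 : F2 = P20 + 2 * P11 * y1 + P02 * y1 ^ 2 + P01 * y2)
    (hF3 : F3 = P30 + 3 * P21 * y1 + 3 * P12 * y1 ^ 2 + P03 * y1 ^ 3 + 3 * P11 * y2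
      + 3 * P02 * y1 * y2 + P01 * y3)
    (hF4 : F4 = P40 + 4 * P31 * y1 + 6 * P22 * y1 ^ 2 + 4 * P13 * y1 ^ 3 + P04 * y1 ^ 4
      + 6 * P21 * y2 + 12 * P12 * y1 * y2 + 6 * P03 * y1 ^ 2 * y2 + 3 * P02 * y2 ^ 2
      + 4 * P11 * y3 + 4 * P02 * y1 * y3 + P01 * y4)
    (hU1 : F1 = U1 * p1)
    (hU2 : F2 = U2 * p1 ^ 2 + U1 * p2)
    (hU3 : F3 = U3 * p1 ^ 3 + 3 * U2 * p2 * p1 + U1 * p3)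
    (hU4 : F4 = U4 * p1 ^ 4 + 6 * U3 * p2 * p1 ^ 2 + U2 * (4 * p3 * p1 + 3 * p2 ^ 2) + U1 * p4) :
    y4 + (A1 * y1 + A0) * y3 + B0 * y2 ^ 2 + (C2 * y1 ^ 2 + C1 * y1 + C0) * y2
      + D4 * y1 ^ 4 + D3 * y1 ^ 3 + D2 * y1 ^ 2 + D1 * y1 + D0
      = p1 ^ 4 / P01 * (U4 + a * U1 + b * U0) := by
  have hU1' : U1 = (P10 + P01 * y1) / p1 := by
    rw [eq_div_iff hp1]; linear_combination hF1 - hU1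
  have hU2' : U2 = (P20 + 2 * P11 * y1 + P02 * y1 ^ 2 + P01 * y2 - U1 * p2) / p1 ^ 2 := by
    rw [eq_div_iff (pow_ne_zero 2 hp1)]; linear_combination hF2 - hU2
  have hU3' : U3 = (P30 + 3 * P21 * y1 + 3 * P12 * y1 ^ 2 + P03 * y1 ^ 3 + 3 * P11 * y2
      + 3 * P02 * y1 * y2 + P01 * y3 - 3 * U2 * p2 * p1 - U1 * p3) / p1 ^ 3 := by
    rw [eq_div_iff (pow_ne_zero 3 hp1)]; linear_combination hF3 - hU3
  have hU4' : U4 = (P40 + 4 * P31 * y1 + 6 * P22 * y1 ^ 2 + 4 * P13 * y1 ^ 3 + P04 * y1 ^ 4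
      + 6 * P21 * y2 + 12 * P12 * y1 * y2 + 6 * P03 * y1 ^ 2 * y2 + 3 * P02 * y2 ^ 2
      + 4 * P11 * y3 + 4 * P02 * y1 * y3 + P01 * y4
      - 6 * U3 * p2 * p1 ^ 2 - U2 * (4 * p3 * p1 + 3 * p2 ^ 2) - U1 * p4) / p1 ^ 4 := by
    rw [eq_div_iff (pow_ne_zero 4 hp1)]; linear_combination hF4 - hU4
  subst hA1 hA0 hB0 hC2 hC1 hC0 hD4 hD3 hD2 hD1 hD0 hU0 hU4' hU3' hU2' hU1'
  field_simp
  ring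

theorem first_candidate_equation_characterization_general
    (I J : Set ℝ) (hI : IsOpen I) (hIc : I.OrdConnected)
    (hJ : IsOpen J)
    (φ : ℝ → ℝ) (hφ : ContDiffOn ℝ (⊤ : ℕ∞) φ I) (hφx : ∀ x ∈ I, deriv φ x ≠ 0)
    (ψ : ℝ → ℝ → ℝ) (hψ : Smooth2On ψ (I ×ˢ J))
    (hψy : ∀ x ∈ I, ∀ y ∈ J, py ψ x y ≠ 0)
    (a b : ℝ → ℝ)
    (A0 A1 B0 C0 C1 C2 D0 D1 D2 D3 D4 : ℝ → ℝ → ℝ)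
    (hA1 : ∀ x ∈ I, ∀ y ∈ J, A1 x y = 4 * py (py ψ) x y / py ψ x y)
    (hA0 : ∀ x ∈ I, ∀ y ∈ J, A0 x y
      = -2 * (3 * iteratedDeriv 2 φ x * py ψ x y - 2 * deriv φ x * py (px ψ) x y)
        / (deriv φ x * py ψ x y))
    (hB0 : ∀ x ∈ I, ∀ y ∈ J, B0 x y = 3 * py (py ψ) x y / py ψ x y)
    (hC2 : ∀ x ∈ I, ∀ y ∈ J, C2 x y = 6 * py (py (py ψ)) x y / py ψ x y)
    (hC1 : ∀ x ∈ I, ∀ y ∈ J, C1 x y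
      = -6 * (3 * iteratedDeriv 2 φ x * py (py ψ) x y
          - 2 * deriv φ x * py (py (px ψ)) x y)
        / (deriv φ x * py ψ x y))
    (hC0 : ∀ x ∈ I, ∀ y ∈ J, C0 x y
      = -(((4 * iteratedDeriv 3 φ x * deriv φ x - 15 * (iteratedDeriv 2 φ x) ^ 2)
            * py ψ x y
          + 6 * (3 * iteratedDeriv 2 φ x * py (px ψ) x y
            - deriv φ x * py (px (px ψ)) x y) * deriv φ x)
        / ((deriv φ x) ^ 2 * py ψ x y)))
    (hD4 : ∀ x ∈ I, ∀ y ∈ J, D4 x y = py (py (py (py ψ))) x y / py ψ x y)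
    (hD3 : ∀ x ∈ I, ∀ y ∈ J, D3 x y
      = -2 * (3 * iteratedDeriv 2 φ x * py (py (py ψ)) x y
          - 2 * deriv φ x * py (py (py (px ψ))) x y)
        / (deriv φ x * py ψ x y))
    (hD2 : ∀ x ∈ I, ∀ y ∈ J, D2 x y
      = -((4 * iteratedDeriv 3 φ x * deriv φ x * py (py ψ) x y
          - 15 * (iteratedDeriv 2 φ x) ^ 2 * py (py ψ) x y
          + 18 * iteratedDeriv 2 φ x * deriv φ x * py (py (px ψ)) x y
          - 6 * (deriv φ x) ^ 2 * py (py (px (px ψ))) x y)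
        / ((deriv φ x) ^ 2 * py ψ x y)))
    (hD1 : ∀ x ∈ I, ∀ y ∈ J, D1 x y
      = -((3 * (5 * (iteratedDeriv 2 φ x) ^ 2 * py ψ x y
            - 10 * iteratedDeriv 2 φ x * deriv φ x * py (px ψ) x y
            + 6 * (deriv φ x) ^ 2 * py (px (px ψ)) x y) * iteratedDeriv 2 φ x
          - ((deriv φ x) ^ 3 * py ψ x y * a x + 4 * py (px (px (px ψ))) x y)
            * (deriv φ x) ^ 3
          - 2 * (5 * iteratedDeriv 2 φ x * py ψ x y - 4 * deriv φ x * py (px ψ) x y)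
            * iteratedDeriv 3 φ x * deriv φ x
          + iteratedDeriv 4 φ x * (deriv φ x) ^ 2 * py ψ x y)
        / ((deriv φ x) ^ 3 * py ψ x y)))
    (hD0 : ∀ x ∈ I, ∀ y ∈ J, D0 x y
      = -(((15 * (iteratedDeriv 2 φ x) ^ 3 - (deriv φ x) ^ 6 * a x
            + iteratedDeriv 4 φ x * (deriv φ x) ^ 2) * px ψ x y
          - (10 * iteratedDeriv 3 φ x * iteratedDeriv 2 φ x * px ψ x y
            - 4 * iteratedDeriv 3 φ x * deriv φ x * px (px ψ) x y
            + 15 * (iteratedDeriv 2 φ x) ^ 2 * px (px ψ) x y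
            - 6 * iteratedDeriv 2 φ x * deriv φ x * px (px (px ψ)) x y
            + (deriv φ x) ^ 6 * b x * ψ x y
            + (deriv φ x) ^ 2 * px (px (px (px ψ))) x y) * deriv φ x)
        / ((deriv φ x) ^ 3 * py ψ x y)))
    (α β : ℝ → ℝ)
    (hαa : ∀ x ∈ I, α (φ x) = a x) (hβb : ∀ x ∈ I, β (φ x) = b x) :
    ∀ y : ℝ → ℝ, ContDiffOn ℝ 4 y I → (∀ x ∈ I, y x ∈ J) →
      ((∀ x ∈ I, E1val A0 A1 B0 C0 C1 C2 D0 D1 D2 D3 D4 y x = 0) ↔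
        ∃ (u : ℝ → ℝ) (W : Set ℝ), IsOpen W ∧ (∀ x ∈ I, φ x ∈ W) ∧
          ContDiffOn ℝ 4 u W ∧
          (∀ x ∈ I, u (φ x) = ψ x (y x)) ∧
          (∀ x ∈ I, iteratedDeriv 4 u (φ x) + α (φ x) * deriv u (φ x)
            + β (φ x) * u (φ x) = 0)) := by
  intro y hy hyJ
  have hφ4 : ContDiffOn ℝ 4 φ I := hφ.of_le (WithTop.coe_le_coe.2 le_top)
  have hE : ∀ (u : ℝ → ℝ) (W : Set ℝ), IsOpen W → (∀ x ∈ I, φ x ∈ W) → ContDiffOn ℝ 4 u W →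
      (∀ x ∈ I, u (φ x) = ψ x (y x)) → ∀ x ∈ I,
      E1val A0 A1 B0 C0 C1 C2 D0 D1 D2 D3 D4 y x = deriv φ x ^ 4 / py ψ x (y x) *
        (iteratedDeriv 4 u (φ x) + a x * deriv u (φ x) + b x * u (φ x)) := by
    intro u W hW hφW hu huφ x hx
    have hφx4 := hφ4.contDiffAt (hI.mem_nhds hx)
    have hux4 := hu.contDiffAt (hW.mem_nhds (hφW x hx))
    have hjet (k : ℕ) : iteratedDeriv k (fun s => ψ s (y s)) x = iteratedDeriv k (u ∘ φ) x :=
      EqOn.iteratedDeriv_of_isOpen (fun s hs => (huφ s hs).symm) hI k hx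
    have on_graph {P : ℝ → ℝ → Prop} (h : ∀ x ∈ I, ∀ y ∈ J, P x y) : P x (y x) :=
      h x hx _ (hyJ x hx)
    exact E1_jet_identity (hφx x hx) (on_graph hψy) (on_graph hA1) (on_graph hA0)
      (on_graph hB0) (on_graph hC2) (on_graph hC1) (on_graph hC0) (on_graph hD4) (on_graph hD3)
      (on_graph hD2) (on_graph hD1) (on_graph hD0) (huφ x hx)
      (iteratedDeriv_one_comp_graph hI hJ hψ (hy.of_le (by norm_num)) hyJ hx)
      (iteratedDeriv_two_comp_graph hI hJ hψ (hy.of_le (by norm_num)) hyJ hx)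
      (iteratedDeriv_three_comp_graph hI hJ hψ (hy.of_le (by norm_num)) hyJ hx)
      (iteratedDeriv_four_comp_graph hI hJ hψ hy hyJ hx)
      ((hjet 1).trans (iteratedDeriv_one (f := u ∘ φ) ▸ deriv_comp x
        (hux4.differentiableAt (by norm_num)) (hφx4.differentiableAt (by norm_num))))
      ((hjet 2).trans (iteratedDeriv_comp_two (hux4.of_le (by norm_num))
        (hφx4.of_le (by norm_num))))
      ((hjet 3).trans (iteratedDeriv_comp_three (hux4.of_le (by norm_num))
        (hφx4.of_le (by norm_num))))
      ((hjet 4).trans (iteratedDeriv_comp_four hux4 hφx4))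
  constructor
  · intro hE1
    obtain ⟨u, W, hW, hφW, hu, huφ⟩ := exists_comp_eq_of_deriv_ne_zero hI hIc (by simp) hφ4 hφx
      (hψ.comp_graph hy hyJ)
    refine ⟨u, W, hW, hφW, hu, huφ, fun x hx => ?_⟩
    have hfac : deriv φ x ^ 4 / py ψ x (y x) ≠ 0 :=
      div_ne_zero (pow_ne_zero 4 (hφx x hx)) (hψy x hx _ (hyJ x hx))
    rw [hαa x hx, hβb x hx]
    exact (mul_eq_zero.1 ((hE u W hW hφW hu huφ x hx).symm.trans (hE1 x hx))).resolve_left hfac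
  · rintro ⟨u, W, hW, hφW, hu, huφ, hlin⟩ x hx
    rw [hE u W hW hφW hu huφ x hx, ← hαa x hx, ← hβb x hx, hlin x hx, mul_zero]

set_option maxHeartbeats 1000000 in
/-- with the coefficients of (E1) given by the formulas determined by the
point transformation `t = φ(x)`, `u = ψ(x,y)` and the linear equation
`u'''' + α(t)u' + β(t)u = 0`, a function `y` is a solution of (E1) if and only if its
image `u` is a solution of the linear equation. -/
theorem first_candidate_equation_characterization
    (I J : Set ℝ) (hI : IsOpen I) (hIc : I.OrdConnected)
    (hJ : IsOpen J) (hJc : J.OrdConnected)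
    (φ : ℝ → ℝ) (hφ : ContDiffOn ℝ (⊤ : ℕ∞) φ I) (hφx : ∀ x ∈ I, deriv φ x ≠ 0)
    (ψ : ℝ → ℝ → ℝ) (hψ : Smooth2On ψ (I ×ˢ J))
    (hψy : ∀ x ∈ I, ∀ y ∈ J, py ψ x y ≠ 0)
    (a b : ℝ → ℝ) (ha : ContDiffOn ℝ (⊤ : ℕ∞) a I) (hb : ContDiffOn ℝ (⊤ : ℕ∞) b I)
    (A0 A1 B0 C0 C1 C2 D0 D1 D2 D3 D4 : ℝ → ℝ → ℝ)
    (hA1 : ∀ x ∈ I, ∀ y ∈ J, A1 x y = 4 * py (py ψ) x y / py ψ x y)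
    (hA0 : ∀ x ∈ I, ∀ y ∈ J, A0 x y
      = -2 * (3 * iteratedDeriv 2 φ x * py ψ x y - 2 * deriv φ x * py (px ψ) x y)
        / (deriv φ x * py ψ x y))
    (hB0 : ∀ x ∈ I, ∀ y ∈ J, B0 x y = 3 * py (py ψ) x y / py ψ x y)
    (hC2 : ∀ x ∈ I, ∀ y ∈ J, C2 x y = 6 * py (py (py ψ)) x y / py ψ x y)
    (hC1 : ∀ x ∈ I, ∀ y ∈ J, C1 x y
      = -6 * (3 * iteratedDeriv 2 φ x * py (py ψ) x y
          - 2 * deriv φ x * py (py (px ψ)) x y)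
        / (deriv φ x * py ψ x y))
    (hC0 : ∀ x ∈ I, ∀ y ∈ J, C0 x y
      = -(((4 * iteratedDeriv 3 φ x * deriv φ x - 15 * (iteratedDeriv 2 φ x) ^ 2)
            * py ψ x y
          + 6 * (3 * iteratedDeriv 2 φ x * py (px ψ) x y
            - deriv φ x * py (px (px ψ)) x y) * deriv φ x)
        / ((deriv φ x) ^ 2 * py ψ x y)))
    (hD4 : ∀ x ∈ I, ∀ y ∈ J, D4 x y = py (py (py (py ψ))) x y / py ψ x y)
    (hD3 : ∀ x ∈ I, ∀ y ∈ J, D3 x y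
      = -2 * (3 * iteratedDeriv 2 φ x * py (py (py ψ)) x y
          - 2 * deriv φ x * py (py (py (px ψ))) x y)
        / (deriv φ x * py ψ x y))
    (hD2 : ∀ x ∈ I, ∀ y ∈ J, D2 x y
      = -((4 * iteratedDeriv 3 φ x * deriv φ x * py (py ψ) x y
          - 15 * (iteratedDeriv 2 φ x) ^ 2 * py (py ψ) x y
          + 18 * iteratedDeriv 2 φ x * deriv φ x * py (py (px ψ)) x y
          - 6 * (deriv φ x) ^ 2 * py (py (px (px ψ))) x y)
        / ((deriv φ x) ^ 2 * py ψ x y)))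
    (hD1 : ∀ x ∈ I, ∀ y ∈ J, D1 x y
      = -((3 * (5 * (iteratedDeriv 2 φ x) ^ 2 * py ψ x y
            - 10 * iteratedDeriv 2 φ x * deriv φ x * py (px ψ) x y
            + 6 * (deriv φ x) ^ 2 * py (px (px ψ)) x y) * iteratedDeriv 2 φ x
          - ((deriv φ x) ^ 3 * py ψ x y * a x + 4 * py (px (px (px ψ))) x y)
            * (deriv φ x) ^ 3
          - 2 * (5 * iteratedDeriv 2 φ x * py ψ x y - 4 * deriv φ x * py (px ψ) x y)
            * iteratedDeriv 3 φ x * deriv φ x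
          + iteratedDeriv 4 φ x * (deriv φ x) ^ 2 * py ψ x y)
        / ((deriv φ x) ^ 3 * py ψ x y)))
    (hD0 : ∀ x ∈ I, ∀ y ∈ J, D0 x y
      = -(((15 * (iteratedDeriv 2 φ x) ^ 3 - (deriv φ x) ^ 6 * a x
            + iteratedDeriv 4 φ x * (deriv φ x) ^ 2) * px ψ x y
          - (10 * iteratedDeriv 3 φ x * iteratedDeriv 2 φ x * px ψ x y
            - 4 * iteratedDeriv 3 φ x * deriv φ x * px (px ψ) x y
            + 15 * (iteratedDeriv 2 φ x) ^ 2 * px (px ψ) x y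
            - 6 * iteratedDeriv 2 φ x * deriv φ x * px (px (px ψ)) x y
            + (deriv φ x) ^ 6 * b x * ψ x y
            + (deriv φ x) ^ 2 * px (px (px (px ψ))) x y) * deriv φ x)
        / ((deriv φ x) ^ 3 * py ψ x y)))
    (α β : ℝ → ℝ)
    (hα : ContDiffOn ℝ (⊤ : ℕ∞) α (φ '' I)) (hβ : ContDiffOn ℝ (⊤ : ℕ∞) β (φ '' I))
    (hαa : ∀ x ∈ I, α (φ x) = a x) (hβb : ∀ x ∈ I, β (φ x) = b x) :
    ∀ y : ℝ → ℝ, ContDiffOn ℝ 4 y I → (∀ x ∈ I, y x ∈ J) →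
      ((∀ x ∈ I, E1val A0 A1 B0 C0 C1 C2 D0 D1 D2 D3 D4 y x = 0) ↔
        ∃ (u : ℝ → ℝ) (W : Set ℝ), IsOpen W ∧ (∀ x ∈ I, φ x ∈ W) ∧
          ContDiffOn ℝ 4 u W ∧
          (∀ x ∈ I, u (φ x) = ψ x (y x)) ∧
          (∀ x ∈ I, iteratedDeriv 4 u (φ x) + α (φ x) * deriv u (φ x)
            + β (φ x) * u (φ x) = 0)) :=
  first_candidate_equation_characterization_general I J hI hIc hJ φ hφ hφx ψ hψ hψy a b A0 A1 B0 C0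
    C1 C2 D0 D1 D2 D3 D4 hA1 hA0 hB0 hC2 hC1 hC0 hD4 hD3 hD2 hD1 hD0 α β hαa hβb
end

section
/- Let I, J be open intervals, φ: I → ℝ smooth with φ' ≠ 0 everywhere, ψ: I×J → ℝ smooth with ψ_y ≠ 0 everywhere, and A0, A1 smooth on I×J. If 4ψ_yy = ψ_y·A1 and 4φ'·ψ_xy = ψ_y·(6φ'' + φ'·A0) hold on I×J, then ∂A0/∂y = ∂A1/∂x on I×J. -/
open Set

/-!
Differentiate the first identity in `x` and the second in `y` (its `φ`-terms do not depend
on `y`). Since `ψ_yyx = ψ_xyy`, subtracting `φ'` times the first derived identity from the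
second and using the original identities to eliminate `ψ_yy` and `φ' ψ_xy` leaves
`φ' ψ_y (A0_y - A1_x) = 0`.
-/

open Topology Filter

section Slices

variable {E : Type*} [NormedAddCommGroup E] [NormedSpace ℝ E] {x y : ℝ}

theorem eventually_slice_fst {P : ℝ × ℝ → Prop} (h : ∀ᶠ p in 𝓝 (x, y), P p) :
    ∀ᶠ s in 𝓝 x, P (s, y) :=
  ((Continuous.prodMk_left y).tendsto x).eventually h

theorem eventually_slice_snd {P : ℝ × ℝ → Prop} (h : ∀ᶠ p in 𝓝 (x, y), P p) :
    ∀ᶠ t in 𝓝 y, P (x, t) :=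
  ((Continuous.prodMk_right x).tendsto y).eventually h

theorem HasFDerivAt.hasDerivAt_slice_fst {G : ℝ × ℝ → E} {G' : ℝ × ℝ →L[ℝ] E}
    (h : HasFDerivAt G G' (x, y)) : HasDerivAt (fun s => G (s, y)) (G' (1, 0)) x :=
  h.comp_hasDerivAt x ((hasDerivAt_id x).prodMk (hasDerivAt_const x y))

theorem HasFDerivAt.hasDerivAt_slice_snd {G : ℝ × ℝ → E} {G' : ℝ × ℝ →L[ℝ] E}
    (h : HasFDerivAt G G' (x, y)) : HasDerivAt (fun t => G (x, t)) (G' (0, 1)) y :=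
  h.comp_hasDerivAt y ((hasDerivAt_const y x).prodMk (hasDerivAt_id y))

end Slices

namespace Smooth2On

variable {U : Set (ℝ × ℝ)} {f : ℝ → ℝ → ℝ} {x y : ℝ}

theorem differentiableAt (hf : Smooth2On f U) (hU : IsOpen U) (hxy : (x, y) ∈ U) :
    DifferentiableAt ℝ (fun p : ℝ × ℝ => f p.1 p.2) (x, y) :=
  (hf.contDiffAt (hU.mem_nhds hxy)).differentiableAt (by simp)

theorem hasDerivAt_px (hf : Smooth2On f U) (hU : IsOpen U) (hxy : (x, y) ∈ U) :
    HasDerivAt (fun s => f s y) (px f x y) x :=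
  (hf.differentiableAt hU hxy).hasFDerivAt.hasDerivAt_slice_fst.differentiableAt.hasDerivAt

theorem hasDerivAt_py (hf : Smooth2On f U) (hU : IsOpen U) (hxy : (x, y) ∈ U) :
    HasDerivAt (fun t => f x t) (py f x y) y :=
  (hf.differentiableAt hU hxy).hasFDerivAt.hasDerivAt_slice_snd.differentiableAt.hasDerivAt

theorem px_eq_fderiv (hf : Smooth2On f U) (hU : IsOpen U) (hxy : (x, y) ∈ U) :
    px f x y = fderiv ℝ (fun p : ℝ × ℝ => f p.1 p.2) (x, y) (1, 0) :=
  (hf.differentiableAt hU hxy).hasFDerivAt.hasDerivAt_slice_fst.deriv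

theorem py_eq_fderiv (hf : Smooth2On f U) (hU : IsOpen U) (hxy : (x, y) ∈ U) :
    py f x y = fderiv ℝ (fun p : ℝ × ℝ => f p.1 p.2) (x, y) (0, 1) :=
  (hf.differentiableAt hU hxy).hasFDerivAt.hasDerivAt_slice_snd.deriv

theorem contDiffOn_fderiv_apply (hf : Smooth2On f U) (hU : IsOpen U) (v : ℝ × ℝ) :
    ContDiffOn ℝ (⊤ : ℕ∞) (fun p : ℝ × ℝ => fderiv ℝ (fun q : ℝ × ℝ => f q.1 q.2) p v) U :=
  (hf.fderiv_of_isOpen hU (m := (⊤ : ℕ∞)) le_rfl).clm_apply contDiffOn_const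

theorem px_of_isOpen_s8 (hf : Smooth2On f U) (hU : IsOpen U) : Smooth2On (px f) U :=
  (hf.contDiffOn_fderiv_apply hU (1, 0)).congr fun _ hp => hf.px_eq_fderiv hU hp

theorem py_of_isOpen_s8 (hf : Smooth2On f U) (hU : IsOpen U) : Smooth2On (py f) U :=
  (hf.contDiffOn_fderiv_apply hU (0, 1)).congr fun _ hp => hf.py_eq_fderiv hU hp

theorem px_py_comm (hf : Smooth2On f U) (hU : IsOpen U) (hxy : (x, y) ∈ U) :
    px (py f) x y = py (px f) x y := by
  set F : ℝ × ℝ → ℝ := fun p => f p.1 p.2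
  have hF : ContDiffAt ℝ (⊤ : ℕ∞) F (x, y) := hf.contDiffAt (hU.mem_nhds hxy)
  have hH : HasFDerivAt (fderiv ℝ F) (fderiv ℝ (fderiv ℝ F) (x, y)) (x, y) :=
    ((hF.fderiv_right (m := 1) (by norm_cast)).differentiableAt one_ne_zero).hasFDerivAt
  have hpx : px (py f) x y = fderiv ℝ (fderiv ℝ F) (x, y) (1, 0) (0, 1) := by
    have hG := (hH.clm_apply (hasFDerivAt_const ((0 : ℝ), (1 : ℝ)) _)).hasDerivAt_slice_fst
    refine HasDerivAt.deriv ?_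
    simpa using hG.congr_of_eventuallyEq (eventually_slice_fst ((hU.eventually_mem hxy).mono
      fun p hp => hf.py_eq_fderiv hU hp))
  have hpy : py (px f) x y = fderiv ℝ (fderiv ℝ F) (x, y) (0, 1) (1, 0) := by
    have hG := (hH.clm_apply (hasFDerivAt_const ((1 : ℝ), (0 : ℝ)) _)).hasDerivAt_slice_snd
    refine HasDerivAt.deriv ?_
    simpa using hG.congr_of_eventuallyEq (eventually_slice_snd ((hU.eventually_mem hxy).mono
      fun p hp => hf.px_eq_fderiv hU hp))
  rw [hpx, hpy]
  exact (hF.isSymmSndFDerivAt (by rw [minSmoothness_of_isRCLikeNormedField]; norm_cast)).eq _ _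

theorem px_py_py_comm (hf : Smooth2On f U) (hU : IsOpen U) (hxy : (x, y) ∈ U) :
    px (py (py f)) x y = py (py (px f)) x y := by
  rw [(hf.py_of_isOpen_s8 hU).px_py_comm hU hxy]
  exact Filter.EventuallyEq.deriv_eq
    (eventually_slice_snd ((hU.eventually_mem hxy).mono fun p hp => hf.px_py_comm hU hp))

end Smooth2On

theorem compatibility_A0y_eq_A1x_general
    (I J : Set ℝ) (hI : IsOpen I)
    (hJ : IsOpen J)
    (φ : ℝ → ℝ)
    (hφx : ∀ x ∈ I, deriv φ x ≠ 0)
    (ψ A0 A1 : ℝ → ℝ → ℝ)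
    (hψ : Smooth2On ψ (I ×ˢ J))
    (hψy : ∀ x ∈ I, ∀ y ∈ J, py ψ x y ≠ 0)
    (hA0 : Smooth2On A0 (I ×ˢ J)) (hA1 : Smooth2On A1 (I ×ˢ J))
    (h1 : ∀ x ∈ I, ∀ y ∈ J, 4 * py (py ψ) x y = py ψ x y * A1 x y)
    (h2 : ∀ x ∈ I, ∀ y ∈ J,
      4 * deriv φ x * py (px ψ) x y
        = py ψ x y * (6 * iteratedDeriv 2 φ x + deriv φ x * A0 x y)) :
    ∀ x ∈ I, ∀ y ∈ J, py A0 x y = px A1 x y := by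
  intro x hx y hy
  have hU : IsOpen (I ×ˢ J) := hI.prod hJ
  have hxy : (x, y) ∈ I ×ˢ J := ⟨hx, hy⟩
  have hψy_smooth := hψ.py_of_isOpen_s8 hU
  have h1_x : 4 * px (py (py ψ)) x y = px (py ψ) x y * A1 x y + py ψ x y * px A1 x y :=
    ((((hψy_smooth.py_of_isOpen_s8 hU).hasDerivAt_px hU hxy).const_mul 4).congr_of_eventuallyEq
      ((hI.eventually_mem hx).mono fun s hs => (h1 s hs y hy).symm)).unique
      ((hψy_smooth.hasDerivAt_px hU hxy).mul (hA1.hasDerivAt_px hU hxy))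
  have h2_y : 4 * deriv φ x * py (py (px ψ)) x y
      = py (py ψ) x y * (6 * iteratedDeriv 2 φ x + deriv φ x * A0 x y)
        + py ψ x y * (deriv φ x * py A0 x y) :=
    (((((hψ.px_of_isOpen_s8 hU).py_of_isOpen_s8 hU).hasDerivAt_py hU hxy).const_mul
      (4 * deriv φ x)).congr_of_eventuallyEq
      ((hJ.eventually_mem hy).mono fun t ht => (h2 x hx t ht).symm)).unique
      ((hψy_smooth.hasDerivAt_py hU hxy).mul
        (((hA0.hasDerivAt_py hU hxy).const_mul _).const_add _))
  have key : deriv φ x * py ψ x y * (py A0 x y - px A1 x y) = 0 := by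
    linear_combination deriv φ x * h1_x - h2_y - 4 * deriv φ x * hψ.px_py_py_comm hU hxy
      + deriv φ x * A1 x y * hψ.px_py_comm hU hxy
      + (A1 x y * h2 x hx y hy
        - (6 * iteratedDeriv 2 φ x + deriv φ x * A0 x y) * h1 x hx y hy) / 4
  simpa [sub_eq_zero, hφx x hx, hψy x hx y hy] using key

/-- if `4ψ_yy = ψ_y·A1` and `4φ'·ψ_xy = ψ_y·(6φ'' + φ'·A0)` hold on `I × J`,
then `∂A0/∂y = ∂A1/∂x` on `I × J`. -/
theorem compatibility_A0y_eq_A1x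
    (I J : Set ℝ) (hI : IsOpen I) (hIc : I.OrdConnected)
    (hJ : IsOpen J) (hJc : J.OrdConnected)
    (φ : ℝ → ℝ) (hφ : ContDiffOn ℝ (⊤ : ℕ∞) φ I)
    (hφx : ∀ x ∈ I, deriv φ x ≠ 0)
    (ψ A0 A1 : ℝ → ℝ → ℝ)
    (hψ : Smooth2On ψ (I ×ˢ J))
    (hψy : ∀ x ∈ I, ∀ y ∈ J, py ψ x y ≠ 0)
    (hA0 : Smooth2On A0 (I ×ˢ J)) (hA1 : Smooth2On A1 (I ×ˢ J))
    (h1 : ∀ x ∈ I, ∀ y ∈ J, 4 * py (py ψ) x y = py ψ x y * A1 x y)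
    (h2 : ∀ x ∈ I, ∀ y ∈ J,
      4 * deriv φ x * py (px ψ) x y
        = py ψ x y * (6 * iteratedDeriv 2 φ x + deriv φ x * A0 x y)) :
    ∀ x ∈ I, ∀ y ∈ J, py A0 x y = px A1 x y :=
  compatibility_A0y_eq_A1x_general I J hI hJ φ hφx ψ A0 A1 hψ hψy hA0 hA1 h1 h2
end
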